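/- arXiv:1906.04605 — 5 statements merged into one kernel-verified Lean document; each statement's English description precedes it below -/
import Mathlib

section
/- Let A ∈ ℝ^{N×N}, let σ : Fin N → Fin q be a partition into q nonempty clusters with indicator matrix E ∈ ℝ^{N×q}, let D = EᵀE, let Q = D⁻¹EᵀAE be the quotient matrix, and let T̃ = D^{-1/2}Eᵀ. Then T̃·A·T̃ᵀ = D^{1/2}·Q·D^{-1/2}; in particular, the matrices T̃·A·T̃ᵀ and Q are similar. -/
open Matrix Finset

/-- **Lemma 2.** The parallel block `T̃·A·T̃ᵀ` of the IRR-transformed adjacency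
matrix equals `D^{1/2}·Q·D^{-1/2}`, where `Q = D⁻¹EᵀAE` is the quotient matrix;
in particular the two matrices are similar. -/
theorem stmt_4 (N q : ℕ) (A : Matrix (Fin N) (Fin N) ℝ) (σ : Fin N → Fin q)
    (hne : Function.Surjective σ)
    (E : Matrix (Fin N) (Fin q) ℝ)
    (hE : ∀ i k, E i k = if σ i = k then 1 else 0)
    (D : Matrix (Fin q) (Fin q) ℝ) (hD : D = Eᵀ * E)
    (Q : Matrix (Fin q) (Fin q) ℝ) (hQ : Q = D⁻¹ * (Eᵀ * A * E))
    (Dhalf Dhalfinv : Matrix (Fin q) (Fin q) ℝ)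
    (hDhalf : Dhalf = Matrix.diagonal
      (fun k => Real.sqrt ((univ.filter (fun i => σ i = k)).card : ℝ)))
    (hDhalfinv : Dhalfinv = Matrix.diagonal
      (fun k => 1 / Real.sqrt ((univ.filter (fun i => σ i = k)).card : ℝ)))
    (Ttil : Matrix (Fin q) (Fin N) ℝ) (hT : Ttil = Dhalfinv * Eᵀ) :
    Ttil * A * Ttilᵀ = Dhalf * Q * Dhalfinv ∧
    ∃ S : Matrix (Fin q) (Fin q) ℝ, IsUnit S ∧ Ttil * A * Ttilᵀ = S * Q * S⁻¹ := by
  set c : Fin q → ℝ := fun k => ((univ.filter (fun i => σ i = k)).card : ℝ) with hcdef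
  have hc : ∀ k : Fin q, (0:ℝ) < c k := by
    intro k
    have h1 : (univ.filter (fun i => σ i = k)).Nonempty := by
      obtain ⟨i, hi⟩ := hne k
      exact ⟨i, by simp [hi]⟩
    have h2 := Finset.card_pos.mpr h1
    simp only [hcdef]
    exact_mod_cast h2
  have hs : ∀ k, Real.sqrt (c k) ≠ 0 := fun k =>
    ne_of_gt (Real.sqrt_pos.mpr (hc k))
  have hcne : ∀ k, c k ≠ 0 := fun k => (hc k).ne'
  have hDdiag : D = Matrix.diagonal c := by
    subst hD
    ext k l
    simp only [Matrix.mul_apply, Matrix.transpose_apply, hE, Matrix.diagonal_apply]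
    by_cases h : k = l
    · subst h
      rw [if_pos rfl]
      have h3 : ∀ x : Fin N, (if σ x = k then (1:ℝ) else 0) * (if σ x = k then 1 else 0)
          = if σ x = k then 1 else 0 := fun x => by split <;> simp
      rw [Finset.sum_congr rfl (fun x _ => h3 x)]
      simp [Finset.sum_boole, hcdef]
    · rw [if_neg h]
      apply Finset.sum_eq_zero
      intro i _
      by_cases h1 : σ i = k <;> by_cases h2 : σ i = l <;> simp_all
  have hDinv : D⁻¹ = Matrix.diagonal (fun k => (c k)⁻¹) := by
    apply Matrix.inv_eq_right_inv
    rw [hDdiag, Matrix.diagonal_mul_diagonal, ← Matrix.diagonal_one]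
    exact congrArg Matrix.diagonal (funext fun k => mul_inv_cancel₀ (hcne k))
  have hkey : Dhalf * D⁻¹ = Dhalfinv := by
    rw [hDhalf, hDinv, hDhalfinv, Matrix.diagonal_mul_diagonal]
    refine congrArg Matrix.diagonal (funext fun k => ?_)
    show Real.sqrt (c k) * (c k)⁻¹ = 1 / Real.sqrt (c k)
    rw [eq_div_iff (hs k), mul_right_comm, Real.mul_self_sqrt (hc k).le]
    exact mul_inv_cancel₀ (hcne k)
  have hone : Dhalf * Dhalfinv = 1 := by
    rw [hDhalf, hDhalfinv, Matrix.diagonal_mul_diagonal, ← Matrix.diagonal_one]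
    refine congrArg Matrix.diagonal (funext fun k => ?_)
    show Real.sqrt (c k) * (1 / Real.sqrt (c k)) = 1
    exact mul_one_div_cancel (hs k)
  have hTtrans : Ttilᵀ = E * Dhalfinv := by
    rw [hT, Matrix.transpose_mul, Matrix.transpose_transpose]
    congr 1
    rw [hDhalfinv, Matrix.diagonal_transpose]
  have hmain : Ttil * A * Ttilᵀ = Dhalf * Q * Dhalfinv := by
    rw [hTtrans, hT, hQ]
    simp only [Matrix.mul_assoc]
    rw [← Matrix.mul_assoc Dhalf D⁻¹, hkey]
  refine ⟨hmain, Dhalf, ?_, ?_⟩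
  · have := invertibleOfRightInverse _ _ hone
    exact isUnit_of_invertible Dhalf
  · rw [Matrix.inv_eq_right_inv hone]
    exact hmain
end

section
/- Let σ : Fin N → Fin q, let J^k ∈ ℝ^{N×N} be the diagonal cluster-indicator matrices, let A ∈ ℝ^{N×N}, let F^1, …, F^q and H be m×m real matrices, and let T ∈ ℝ^{N×N} satisfy T·Tᵀ = I_N and T_{ij} = 0 whenever σ i ≠ σ j. Then (T ⊗ I_m)·(∑_{k=1}^q J^k ⊗ F^k + A ⊗ H)·(Tᵀ ⊗ I_m) = ∑_{k=1}^q J^k ⊗ F^k + (T·A·Tᵀ) ⊗ H, where ⊗ denotes the Kronecker product of matrices. -/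
/-!
Conjugation by `T ⊗ I_m` acts on `X ⊗ Y` as conjugation of `X` by `T`. Since `T` vanishes
between different clusters, it commutes with every cluster indicator `J^k`, and `T Tᵀ = I`
then gives `T J^k Tᵀ = J^k`.
-/

open Matrix Kronecker

namespace Matrix

variable {l n o p r R : Type*} [Fintype n]

theorem commute_diagonal_of_apply_eq_zero [DecidableEq n] [CommSemiring R] (d : n → R)
    (T : Matrix n n R)
    (hT : ∀ i j, d i ≠ d j → T i j = 0) : Commute (diagonal d) T := by
  ext i j
  rw [diagonal_mul, mul_diagonal]
  by_cases hd : d i = d j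
  · rw [hd, mul_comm]
  · simp only [hT i j hd, mul_zero, zero_mul]

theorem mul_mul_transpose_of_commute [DecidableEq n] [Semiring R] {T D : Matrix n n R}
    (hTT : T * Tᵀ = 1) (hD : Commute T D) : T * D * Tᵀ = D := by
  rw [hD.eq, Matrix.mul_assoc, hTT, Matrix.mul_one]

theorem kronecker_one_mul_kronecker_mul_kronecker_one [Fintype o] [Fintype p] [DecidableEq p]
    [CommSemiring R] (P : Matrix l n R) (X : Matrix n o R) (Q : Matrix o r R)
    (Y : Matrix p p R) :
    (P ⊗ₖ (1 : Matrix p p R)) * (X ⊗ₖ Y) * (Q ⊗ₖ (1 : Matrix p p R)) = (P * X * Q) ⊗ₖ Y := by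
  rw [← mul_kronecker_mul, ← mul_kronecker_mul, Matrix.one_mul, Matrix.mul_one]

end Matrix

/-- Transformation of the global dynamics matrix into the IRR coordinate
system (Eq. (8) of the paper):
`(T ⊗ I_m)(∑_k J^k ⊗ F^k + A ⊗ H)(Tᵀ ⊗ I_m) = ∑_k J^k ⊗ F^k + (TATᵀ) ⊗ H`. -/
theorem stmt_6 (N q m : ℕ) (σ : Fin N → Fin q)
    (A : Matrix (Fin N) (Fin N) ℝ)
    (F : Fin q → Matrix (Fin m) (Fin m) ℝ) (H : Matrix (Fin m) (Fin m) ℝ)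
    (T : Matrix (Fin N) (Fin N) ℝ) (hTT : T * Tᵀ = 1)
    (hsupp : ∀ i j, σ i ≠ σ j → T i j = 0)
    (J : Fin q → Matrix (Fin N) (Fin N) ℝ)
    (hJ : ∀ k, J k = Matrix.diagonal (fun i => if σ i = k then (1 : ℝ) else 0)) :
    (T ⊗ₖ (1 : Matrix (Fin m) (Fin m) ℝ)) * (∑ k, J k ⊗ₖ F k + A ⊗ₖ H) *
        (Tᵀ ⊗ₖ (1 : Matrix (Fin m) (Fin m) ℝ))
      = ∑ k, J k ⊗ₖ F k + (T * A * Tᵀ) ⊗ₖ H := by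
  have hJ_fixed : ∀ k, T * J k * Tᵀ = J k := fun k => by
    refine mul_mul_transpose_of_commute hTT (Commute.symm ?_)
    rw [hJ k]
    exact commute_diagonal_of_apply_eq_zero _ T fun i j hij =>
      hsupp i j fun hσ => hij (by rw [hσ])
  simp only [Matrix.mul_add, Matrix.add_mul, Finset.mul_sum, Finset.sum_mul,
    kronecker_one_mul_kronecker_mul_kronecker_one, hJ_fixed]
end

section
/- Let A ∈ ℝ^{N×N}, let σ : Fin N → Fin q be a partition into nonempty clusters that is equitable for A with quotient matrix Q, let F^1, …, F^q and H be m×m real matrices, and let z : Fin N → ℝ^m satisfy z_i = z_j whenever σ i = σ j. Define w : Fin N → ℝ^m by w_i = F^{σ i}·z_i + ∑_{j=1}^N A_{ij} H·z_j. Then w_i = w_j whenever σ i = σ j; that is, the group consensus manifold {z : z_i = z_j whenever σ i = σ j} is invariant under the linear vector field ż_i = F^{σ i} z_i + ∑_j A_{ij} H z_j. -/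
/-! Since `z` is constant on clusters, the coupling term `∑ⱼ A i j • H z j` depends only on the
row sums of `A` over the clusters, and equitability makes these depend only on the cluster of `i`.
-/

open Finset

theorem Finset.sum_smul_of_forall_eq {ι R M : Type*} [Semiring R] [AddCommMonoid M] [Module R M]
    {s : Finset ι} {f : ι → M} {c : M} (hf : ∀ j ∈ s, f j = c) (a : ι → R) :
    ∑ j ∈ s, a j • f j = (∑ j ∈ s, a j) • c := by
  rw [Finset.sum_smul]
  exact Finset.sum_congr rfl fun j hj => by rw [hf j hj]

theorem Finset.sum_smul_eq_of_fiberwise_sum_eq {ι κ R M : Type*} [Fintype ι] [Fintype κ]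
    [DecidableEq κ] [Semiring R] [AddCommMonoid M] [Module R M] {σ : ι → κ} {f : ι → M}
    (hf : ∀ j j', σ j = σ j' → f j = f j') {a b : ι → R}
    (hab : ∀ l, ∑ j ∈ univ.filter (fun j => σ j = l), a j
      = ∑ j ∈ univ.filter (fun j => σ j = l), b j) :
    ∑ j, a j • f j = ∑ j, b j • f j := by
  rw [← Finset.sum_fiberwise univ σ (fun j => a j • f j),
    ← Finset.sum_fiberwise univ σ (fun j => b j • f j)]
  refine Finset.sum_congr rfl fun l _ => ?_
  rcases (univ.filter (fun j => σ j = l)).eq_empty_or_nonempty with hempty | ⟨j₀, hj₀⟩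
  · simp only [hempty, Finset.sum_empty]
  · have hconst : ∀ j ∈ univ.filter (fun j => σ j = l), f j = f j₀ := fun j hj =>
      hf j j₀ ((Finset.mem_filter.1 hj).2.trans (Finset.mem_filter.1 hj₀).2.symm)
    rw [Finset.sum_smul_of_forall_eq hconst, Finset.sum_smul_of_forall_eq hconst, hab l]

theorem stmt_7_general (N q m : ℕ) (A : Matrix (Fin N) (Fin N) ℝ) (σ : Fin N → Fin q)
    (Q : Matrix (Fin q) (Fin q) ℝ)
    (hQ : ∀ (i : Fin N) (l : Fin q),
      ∑ j ∈ univ.filter (fun j => σ j = l), A i j = Q (σ i) l)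
    (F : Fin q → Matrix (Fin m) (Fin m) ℝ) (H : Matrix (Fin m) (Fin m) ℝ)
    (z : Fin N → (Fin m → ℝ)) (hz : ∀ i j, σ i = σ j → z i = z j)
    (w : Fin N → (Fin m → ℝ))
    (hw : ∀ i, w i = (F (σ i)).mulVec (z i) + ∑ j, A i j • H.mulVec (z j)) :
    ∀ i j, σ i = σ j → w i = w j := by
  intro i j hij
  have hrows : ∀ l, ∑ k ∈ univ.filter (fun k => σ k = l), A i k
      = ∑ k ∈ univ.filter (fun k => σ k = l), A j k := fun l => by
    rw [hQ i l, hQ j l, hij]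
  have hcoupling : ∑ k, A i k • H.mulVec (z k) = ∑ k, A j k • H.mulVec (z k) :=
    Finset.sum_smul_eq_of_fiberwise_sum_eq (fun k k' hk => by rw [hz k k' hk]) hrows
  rw [hw i, hw j, hcoupling, hz i j hij, hij]

/-- The group consensus manifold is invariant under the network dynamics with
orbit-identical individual dynamics over an equitable partition. -/
theorem stmt_7 (N q m : ℕ) (A : Matrix (Fin N) (Fin N) ℝ) (σ : Fin N → Fin q)
    (hne : Function.Surjective σ)
    (Q : Matrix (Fin q) (Fin q) ℝ)
    (hQ : ∀ (i : Fin N) (l : Fin q),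
      ∑ j ∈ univ.filter (fun j => σ j = l), A i j = Q (σ i) l)
    (F : Fin q → Matrix (Fin m) (Fin m) ℝ) (H : Matrix (Fin m) (Fin m) ℝ)
    (z : Fin N → (Fin m → ℝ)) (hz : ∀ i j, σ i = σ j → z i = z j)
    (w : Fin N → (Fin m → ℝ))
    (hw : ∀ i, w i = (F (σ i)).mulVec (z i) + ∑ j, A i j • H.mulVec (z j)) :
    ∀ i j, σ i = σ j → w i = w j :=
  stmt_7_general N q m A σ Q hQ F H z hz w hw
end

section
/- Let A ∈ ℝ^{N×N}, let π be a permutation of Fin N whose permutation matrix P satisfies P·A = A·P, let F and H be m×m real matrices, and let z : ℝ → (Fin N → ℝ^m) be such that for every i and every t, the function t ↦ z_i(t) has derivative F·z_i(t) + ∑_{j=1}^N A_{ij} H·z_j(t) at t. Define y : ℝ → (Fin N → ℝ^m) by y_i(t) = z_{π⁻¹(i)}(t). Then for every i and every t, the function t ↦ y_i(t) has derivative F·y_i(t) + ∑_{j=1}^N A_{ij} H·y_j(t) at t; that is, permuting a solution of the identical-dynamics network equations by a symmetry of the network yields another solution. -/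
/-!
Commuting with the permutation matrix of `π` says exactly that `π` is an automorphism of the
weighted network, `A (π i) (π j) = A i j`. The network vector field `x ↦ F xᵢ + ∑ⱼ Aᵢⱼ H xⱼ` is
then equivariant under relabelling the nodes by `π`, so the relabelled trajectory has the
relabelled derivative, which is the vector field evaluated at the relabelled state.
-/

open Matrix

section

variable {n ι R : Type*} [Fintype n]

theorem Matrix.permMatrix_mul_eq_mul_permMatrix_iff [DecidableEq n] [NonAssocSemiring R]
    (σ : Equiv.Perm n) (A : Matrix n n R) :
    σ.permMatrix R * A = A * σ.permMatrix R ↔ A.submatrix σ σ = A := by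
  rw [PEquiv.toMatrix_toPEquiv_mul, PEquiv.mul_toMatrix_toPEquiv]
  constructor
  · intro h
    ext i j
    simpa using congr_fun₂ h i (σ j)
  · intro h
    ext i j
    simpa using congr_fun₂ h i (σ.symm j)

variable [Fintype ι] [Semiring R]

def networkField (A : Matrix n n R) (F H : Matrix ι ι R) (x : n → ι → R) : n → ι → R :=
  fun i => F *ᵥ x i + ∑ j, A i j • H *ᵥ x j

theorem networkField_comp_perm {A : Matrix n n R} {σ : Equiv.Perm n} (hA : A.submatrix σ σ = A)
    (F H : Matrix ι ι R) (x : n → ι → R) :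
    networkField A F H (x ∘ σ) = networkField A F H x ∘ σ := by
  ext1 i
  simp only [networkField, Function.comp_apply]
  congr 1
  rw [← Equiv.sum_comp σ (fun j => A (σ i) j • H *ᵥ x j)]
  refine Finset.sum_congr rfl fun j _ => ?_
  rw [← congr_fun₂ hA i j, submatrix_apply]

end

/-- Permuting a solution of the identical-dynamics network equations by a
symmetry of the network (a permutation whose matrix commutes with `A`) yields
another solution. -/
theorem stmt_12 (N m : ℕ) (A : Matrix (Fin N) (Fin N) ℝ) (π : Equiv.Perm (Fin N))
    (P : Matrix (Fin N) (Fin N) ℝ)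
    (hP : ∀ i j, P i j = if i = π j then 1 else 0)
    (hPA : P * A = A * P)
    (F H : Matrix (Fin m) (Fin m) ℝ)
    (z : ℝ → Fin N → (Fin m → ℝ))
    (hz : ∀ (i : Fin N) (t : ℝ), HasDerivAt (fun s => z s i)
      (F.mulVec (z t i) + ∑ j, A i j • H.mulVec (z t j)) t)
    (y : ℝ → Fin N → (Fin m → ℝ))
    (hy : ∀ t i, y t i = z t (π⁻¹ i)) :
    ∀ (i : Fin N) (t : ℝ), HasDerivAt (fun s => y s i)
      (F.mulVec (y t i) + ∑ j, A i j • H.mulVec (y t j)) t := by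
  have hPperm : P = π⁻¹.permMatrix ℝ := by
    ext i j
    simp [hP, Equiv.Perm.inv_def, Equiv.symm_apply_eq]
  have hA : A.submatrix (π⁻¹ : Equiv.Perm (Fin N)) (π⁻¹ : Equiv.Perm (Fin N)) = A :=
    (permMatrix_mul_eq_mul_permMatrix_iff π⁻¹ A).1 (hPperm ▸ hPA)
  intro i t
  have hfield : F *ᵥ y t i + ∑ j, A i j • H *ᵥ y t j = networkField A F H (z t) (π⁻¹ i) := by
    rw [funext (hy t)]
    exact congr_fun (networkField_comp_perm hA F H (z t)) i
  rw [hfield, show (fun s => y s i) = fun s => z s (π⁻¹ i) from funext fun s => hy s i]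
  exact hz (π⁻¹ i) t
end

section
/- Let A ∈ ℝ^{N×N} be symmetric, let σ : Fin N → Fin q be a partition into nonempty clusters of sizes N_k that is equitable for A, and let T ∈ ℝ^{N×N} be orthogonal (TᵀT = T·Tᵀ = I_N) such that there is an injection ι : Fin q → Fin N with row ι(k) of T equal to the normalized indicator of cluster k: T_{ι(k), j} = 1/√N_k if σ j = k and 0 otherwise. Then the matrix B = T·A·Tᵀ has zero entries coupling the parallel and orthogonal coordinates: for every k ∈ Fin q and every r ∈ Fin N not in the range of ι, B_{r, ι(k)} = 0 and B_{ι(k), r} = 0. -/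
open Matrix Finset

/-!
Write `e_l` for the indicator vector of cluster `l`. Equitability says that `A e_k = ∑_l Q_{lk} e_l`,
i.e. the span of the indicators is `A`-invariant. The rows of `T` outside the range of `ι` are
orthogonal to the rows `ι l`, of which the `e_l` are multiples, hence to the whole span and so to
`A e_k`; this is `B_{r, ι k} = 0`. The transposed entry vanishes because `B` is symmetric.
-/

namespace Matrix

variable {n m R : Type*} [Fintype n] [DecidableEq m]

def clusterIndicator [Zero R] [One R] (σ : n → m) (l : m) : n → R :=
  fun j => if σ j = l then 1 else 0

section CommSemiring

variable [CommSemiring R]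

theorem dotProduct_clusterIndicator (v : n → R) (σ : n → m) (l : m) :
    v ⬝ᵥ clusterIndicator σ l = ∑ j ∈ univ.filter (fun j => σ j = l), v j := by
  simp [dotProduct, clusterIndicator, sum_filter]

theorem mulVec_clusterIndicator_of_equitable {A : Matrix n n R} {σ : n → m}
    {Q : Matrix m m R} (hQ : ∀ i l, ∑ j ∈ univ.filter (fun j => σ j = l), A i j = Q (σ i) l)
    (l : m) : A *ᵥ clusterIndicator σ l = fun i => Q (σ i) l := by
  ext i
  rw [mulVec, dotProduct_clusterIndicator, hQ]

theorem dotProduct_comp_eq_sum_clusterIndicator [Fintype m] (v : n → R) (σ : n → m)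
    (f : m → R) : v ⬝ᵥ (f ∘ σ) = ∑ l, f l * (v ⬝ᵥ clusterIndicator σ l) := by
  rw [dotProduct, ← sum_fiberwise univ σ]
  refine sum_congr rfl fun l _ => ?_
  rw [dotProduct_clusterIndicator, mul_sum]
  refine sum_congr rfl fun j hj => ?_
  rw [Function.comp_apply, (mem_filter.mp hj).2, mul_comm]

theorem dotProduct_mulVec_clusterIndicator_eq_zero [Fintype m] {A : Matrix n n R}
    {σ : n → m} {Q : Matrix m m R}
    (hQ : ∀ i l, ∑ j ∈ univ.filter (fun j => σ j = l), A i j = Q (σ i) l)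
    {v : n → R} (hv : ∀ l, v ⬝ᵥ clusterIndicator σ l = 0) (k : m) :
    v ⬝ᵥ (A *ᵥ clusterIndicator σ k) = 0 := by
  rw [mulVec_clusterIndicator_of_equitable hQ k]
  exact (dotProduct_comp_eq_sum_clusterIndicator v σ (fun l => Q l k)).trans
    (sum_eq_zero fun l _ => by rw [hv l, mul_zero])

theorem mul_mul_transpose_apply (T A : Matrix n n R) (r s : n) :
    (T * A * Tᵀ) r s = T r ⬝ᵥ (A *ᵥ T s) := by
  rw [mul_apply', dotProduct_mulVec]
  rfl

theorem IsSymm.mul_mul_transpose {A : Matrix n n R} (hA : A.IsSymm) (T : Matrix n n R) :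
    (T * A * Tᵀ).IsSymm := by
  simp only [IsSymm, transpose_mul, transpose_transpose, hA.eq, Matrix.mul_assoc]

end CommSemiring

theorem dotProduct_rows_eq_zero_of_mul_transpose_eq_one [DecidableEq n] [CommSemiring R]
    {T : Matrix n n R} (hT : T * Tᵀ = 1) {r s : n} (hrs : r ≠ s) : T r ⬝ᵥ T s = 0 := by
  rw [← one_apply_ne hrs, ← hT, mul_apply']
  rfl

/-- Also true for an empty cluster, where both sides vanish since `1 / √0 = 0`. -/
theorem clusterIndicator_eq_smul {σ : n → m} {l : m} {u : n → ℝ}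
    (hu : ∀ j, u j = if σ j = l then 1 / √((univ.filter (fun i => σ i = l)).card : ℝ) else 0) :
    clusterIndicator σ l = √((univ.filter (fun i => σ i = l)).card : ℝ) • u := by
  ext j
  obtain hempty | hcard := eq_or_ne (univ.filter (fun i => σ i = l)).card 0
  · have : σ j ≠ l := fun h => card_ne_zero_of_mem (mem_filter.mpr ⟨mem_univ j, h⟩) hempty
    simp [clusterIndicator, hu, this]
  · have : √((univ.filter (fun i => σ i = l)).card : ℝ) ≠ 0 := by positivity
    by_cases h : σ j = l <;> simp [clusterIndicator, hu, h, this]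

end Matrix

theorem stmt_13_general (N q : ℕ) (A : Matrix (Fin N) (Fin N) ℝ) (hA : Aᵀ = A)
    (σ : Fin N → Fin q)
    (Q : Matrix (Fin q) (Fin q) ℝ)
    (hQ : ∀ (i : Fin N) (l : Fin q),
      ∑ j ∈ univ.filter (fun j => σ j = l), A i j = Q (σ i) l)
    (T : Matrix (Fin N) (Fin N) ℝ) (hT2 : T * Tᵀ = 1)
    (ι : Fin q → Fin N)
    (hrow : ∀ (k : Fin q) (j : Fin N), T (ι k) j =
      if σ j = k then 1 / Real.sqrt ((univ.filter (fun i => σ i = k)).card : ℝ) else 0)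
    (B : Matrix (Fin N) (Fin N) ℝ) (hB : B = T * A * Tᵀ) :
    ∀ (k : Fin q) (r : Fin N), r ∉ Set.range ι → B r (ι k) = 0 ∧ B (ι k) r = 0 := by
  intro k r hr
  have hperp : ∀ l, T r ⬝ᵥ clusterIndicator σ l = 0 := fun l => by
    rw [clusterIndicator_eq_smul (hrow l), dotProduct_smul,
      dotProduct_rows_eq_zero_of_mul_transpose_eq_one hT2 fun h => hr ⟨l, h.symm⟩, smul_zero]
  have hparallel : B r (ι k) = 0 := by
    have hrow_k : T (ι k) = (1 / √((univ.filter (fun i => σ i = k)).card : ℝ)) •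
        clusterIndicator σ k := funext fun j => by simp [hrow, clusterIndicator]
    rw [hB, mul_mul_transpose_apply, hrow_k, mulVec_smul, dotProduct_smul,
      dotProduct_mulVec_clusterIndicator_eq_zero hQ hperp, smul_zero]
  have hB_symm : B.IsSymm := hB ▸ IsSymm.mul_mul_transpose hA T
  exact ⟨hparallel, by rw [hB_symm.apply, hparallel]⟩

/-- The IRR transformation decouples the parallel and orthogonal coordinates:
for a symmetric matrix `A` with an equitable partition, `B = TATᵀ` has zero
entries coupling the rows/columns indexed by the normalized cluster indicators
with the remaining (orthogonal) rows/columns. -/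
theorem stmt_13 (N q : ℕ) (A : Matrix (Fin N) (Fin N) ℝ) (hA : Aᵀ = A)
    (σ : Fin N → Fin q) (hne : Function.Surjective σ)
    (Q : Matrix (Fin q) (Fin q) ℝ)
    (hQ : ∀ (i : Fin N) (l : Fin q),
      ∑ j ∈ univ.filter (fun j => σ j = l), A i j = Q (σ i) l)
    (T : Matrix (Fin N) (Fin N) ℝ) (hT1 : Tᵀ * T = 1) (hT2 : T * Tᵀ = 1)
    (ι : Fin q → Fin N) (hι : Function.Injective ι)
    (hrow : ∀ (k : Fin q) (j : Fin N), T (ι k) j =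
      if σ j = k then 1 / Real.sqrt ((univ.filter (fun i => σ i = k)).card : ℝ) else 0)
    (B : Matrix (Fin N) (Fin N) ℝ) (hB : B = T * A * Tᵀ) :
    ∀ (k : Fin q) (r : Fin N), r ∉ Set.range ι → B r (ι k) = 0 ∧ B (ι k) r = 0 :=
  stmt_13_general N q A hA σ Q hQ T hT2 ι hrow B hB
end
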